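/- Let G = ℤ_n be a cyclic group of order n and G = MS a complete splitting with 0 ≡ m·g (mod n) for some m ∈ M, g ∈ S. Then M is a complete set of representatives modulo gcd(m,n) = n/gcd(g,n), and S is a complete set of representatives modulo n/gcd(m,n) = gcd(g,n). -/

import Mathlib

/-!
Let `k` be the order of `g` and `d = gcd(m, n)`. Since `m • g = 0`, `k ∣ d`. By uniqueness of
representations, `x ↦ x • g` is injective on `M`, so `M` embeds into `ℤ/k`; and `s ↦ m • s` is
injective on `S`, so `S` embeds into `ℤ/(n/d)` because `n/d` is the order of `m` in `ℤ/n`. As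
`|M| |S| = n = d · (n/d)` and `k ≤ d`, both embeddings are bijections and `k = d`.
-/

open Finset

def IsCompleteSplitting {α G : Type*} [SMul α G] (M : Finset α) (S : Finset G) : Prop :=
  ∀ x : G, ∃! p : α × G, p.1 ∈ M ∧ p.2 ∈ S ∧ p.1 • p.2 = x

namespace IsCompleteSplitting

variable {α G : Type*} [SMul α G] {M : Finset α} {S : Finset G}

theorem injOn_smul (h : IsCompleteSplitting M S) :
    Set.InjOn (fun p : α × G => p.1 • p.2) (M ×ˢ S : Finset (α × G)) := by
  rintro ⟨m₁, s₁⟩ hp₁ ⟨m₂, s₂⟩ hp₂ he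
  rw [coe_product, Set.mem_prod] at hp₁ hp₂
  exact (h _).unique ⟨hp₁.1, hp₁.2, rfl⟩ ⟨hp₂.1, hp₂.2, he.symm⟩

theorem injOn_smul_left (h : IsCompleteSplitting M S) {s : G} (hs : s ∈ S) :
    Set.InjOn (· • s) (M : Set α) := fun _ hm₁ _ hm₂ he =>
  congrArg Prod.fst <| h.injOn_smul (mk_mem_product hm₁ hs) (mk_mem_product hm₂ hs) he

theorem injOn_smul_right (h : IsCompleteSplitting M S) {m : α} (hm : m ∈ M) :
    Set.InjOn (m • ·) (S : Set G) := fun _ hs₁ _ hs₂ he =>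
  congrArg Prod.snd <| h.injOn_smul (mk_mem_product hm hs₁) (mk_mem_product hm hs₂) he

theorem card_mul_card [Fintype G] (h : IsCompleteSplitting M S) :
    #M * #S = Fintype.card G := by
  rw [← card_product, ← card_univ]
  refine card_nbij _ (fun _ _ => mem_coe.2 (mem_univ _)) h.injOn_smul fun x _ => ?_
  obtain ⟨p, ⟨hp₁, hp₂, hpx⟩, -⟩ := h x
  exact ⟨p, mem_product.2 ⟨hp₁, hp₂⟩, hpx⟩

end IsCompleteSplitting

theorem Finset.card_le_card_univ_of_injOn {α β : Type*} [Fintype β] {A : Finset α} {f : α → β}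
    (hf : Set.InjOn f A) : #A ≤ Fintype.card β :=
  card_le_card_of_injOn f (fun _ _ => mem_coe.2 (mem_univ _)) hf

theorem Finset.existsUnique_of_injOn_of_card_le {α β : Type*} [Fintype β] {A : Finset α}
    {f : α → β} (hf : Set.InjOn f A) (hcard : Fintype.card β ≤ #A) (b : β) :
    ∃! a, a ∈ A ∧ f a = b := by
  obtain ⟨a, ha, rfl⟩ := surj_on_of_inj_on_of_card_le (fun a _ => f a) (fun _ _ => mem_univ _)
    (fun _ _ h₁ h₂ => hf h₁ h₂) (by simpa using hcard) b (mem_univ b)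
  exact ⟨a, ⟨ha, rfl⟩, fun a' ⟨ha', he⟩ => hf ha' ha he⟩

theorem Set.InjOn.intCast_zmod_of_zsmul {β G : Type*} [AddGroup G] {g : G} {k : ℕ}
    (hk : addOrderOf g ∣ k) {φ : β → ℤ} {A : Set β} (h : Set.InjOn (fun b => φ b • g) A) :
    Set.InjOn (fun b => (φ b : ZMod k)) A := fun _ hb₁ _ hb₂ he =>
  h hb₁ hb₂ <| zsmul_eq_zsmul_iff_modEq.2 <|
    ((ZMod.intCast_eq_intCast_iff _ _ _).1 he).of_dvd (Int.natCast_dvd_natCast.2 hk)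

namespace ZMod

theorem addOrderOf_intCast (m : ℤ) {n : ℕ} (hn : n ≠ 0) :
    addOrderOf (m : ZMod n) = n / m.gcd n := by
  obtain ⟨a, rfl | rfl⟩ := Int.eq_nat_or_neg m <;>
  simp only [Int.cast_neg, Int.cast_natCast, addOrderOf_neg, addOrderOf_coe _ hn, Int.neg_gcd,
    Int.gcd_natCast_natCast, Nat.gcd_comm]

theorem addOrderOf_eq_div_gcd_val {n : ℕ} [NeZero n] (g : ZMod n) :
    addOrderOf g = n / g.val.gcd n := by
  rw [← natCast_zmod_val g, addOrderOf_coe _ (NeZero.ne n), val_natCast_of_lt g.val_lt,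
    Nat.gcd_comm]

theorem addOrderOf_dvd_gcd_of_zsmul_eq_zero {n : ℕ} {g : ZMod n} {m : ℤ} (h : m • g = 0) :
    addOrderOf g ∣ m.gcd n := by
  have hm : (addOrderOf g : ℤ) ∣ m := addOrderOf_dvd_iff_zsmul_eq_zero.2 h
  have hn : (addOrderOf g : ℤ) ∣ n := by
    exact_mod_cast (addOrderOf_dvd_iff_nsmul_eq_zero.2 (by simp))
  exact Int.natCast_dvd_natCast.1 (Int.dvd_coe_gcd hm hn)

theorem zsmul_eq_val_zsmul {n : ℕ} [NeZero n] (m : ℤ) (s : ZMod n) :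
    m • s = (s.val : ℤ) • (m : ZMod n) := by
  simp [mul_comm]

end ZMod

theorem stmt_6 (n : ℕ) (hn : 0 < n)
    (M : Finset ℤ) (S : Finset (ZMod n))
    (hCS : ∀ x : ZMod n, ∃! p : ℤ × ZMod n, p.1 ∈ M ∧ p.2 ∈ S ∧ p.1 • p.2 = x)
    (m : ℤ) (g : ZMod n) (hm : m ∈ M) (hg : g ∈ S) (h0 : m • g = 0) :
    Int.gcd m n = n / Nat.gcd (ZMod.val g) n ∧
    n / Int.gcd m n = Nat.gcd (ZMod.val g) n ∧
    (∀ r : ZMod (Int.gcd m n), ∃! m' : ℤ, m' ∈ M ∧ (m' : ZMod (Int.gcd m n)) = r) ∧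
    (∀ r : ZMod (n / Int.gcd m n), ∃! s : ZMod n,
      s ∈ S ∧ ((ZMod.val s : ℤ) : ZMod (n / Int.gcd m n)) = r) := by
  have hsplit : IsCompleteSplitting M S := hCS
  have : NeZero n := ⟨hn.ne'⟩
  set d := m.gcd n
  have hdn : d ∣ n := Int.natCast_dvd_natCast.1 (Int.gcd_dvd_right m n)
  have : NeZero d := ⟨(Int.gcd_pos_of_ne_zero_right m (by exact_mod_cast hn.ne')).ne'⟩
  have : NeZero (n / d) := ⟨(Nat.div_pos (Nat.le_of_dvd hn hdn) (NeZero.pos d)).ne'⟩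
  have : NeZero (addOrderOf g) := ⟨(addOrderOf_pos g).ne'⟩
  have hord_dvd : addOrderOf g ∣ d := ZMod.addOrderOf_dvd_gcd_of_zsmul_eq_zero h0
  have hMg : Set.InjOn (fun x : ℤ => (x : ZMod (addOrderOf g))) M :=
    Set.InjOn.intCast_zmod_of_zsmul (φ := id) dvd_rfl (hsplit.injOn_smul_left hg)
  have hMd : Set.InjOn (fun x : ℤ => (x : ZMod d)) M :=
    Set.InjOn.intCast_zmod_of_zsmul (φ := id) hord_dvd (hsplit.injOn_smul_left hg)
  have hSd : Set.InjOn (fun s : ZMod n => ((s.val : ℤ) : ZMod (n / d))) S :=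
    Set.InjOn.intCast_zmod_of_zsmul (ZMod.addOrderOf_intCast m hn.ne').dvd
      ((hsplit.injOn_smul_right hm).congr fun s _ => ZMod.zsmul_eq_val_zsmul m s)
  have hcard : #M * #S = d * (n / d) := by
    rw [hsplit.card_mul_card, ZMod.card, Nat.mul_div_cancel' hdn]
  obtain ⟨hMcard, hScard⟩ := (mul_eq_mul_iff_eq_and_eq_of_pos'
    (by simpa using card_le_card_univ_of_injOn hMd) (by simpa using card_le_card_univ_of_injOn hSd)
    (NeZero.pos d) (card_pos.2 ⟨g, hg⟩)).1 hcard
  have hord : addOrderOf g = d := le_antisymm (Nat.le_of_dvd (NeZero.pos d) hord_dvd)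
    (hMcard ▸ by simpa using card_le_card_univ_of_injOn hMg)
  rw [ZMod.addOrderOf_eq_div_gcd_val] at hord
  refine ⟨hord.symm, ?_, existsUnique_of_injOn_of_card_le hMd (by simp [hMcard]),
    existsUnique_of_injOn_of_card_le hSd (by simp [hScard])⟩
  rw [← hord, Nat.div_div_self (Nat.gcd_dvd_right _ _) hn.ne']
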